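/- arXiv:2106.06614 — 4 statements merged into one kernel-verified Lean document; each statement's English description precedes it below -/
import Mathlib

section
/- Let μ, ν be probability distributions on ℕ satisfying stochastic dominance: ∑_{l∈R} μ_l ≤ ∑_{l∈R} ν_l for all upward closed R. Suppose that for every pair (n,m) with n ≺ m at least one of the following holds: (i) μ_n ≤ ν_n, (ii) μ_m ≥ ν_m, (iii) inf_{R ∈ 𝓡_{n,m}} ∑_{l∈R} (ν_l − μ_l) = 0. Then μ = ν. -/
open scoped BigOperators
open Filter

/-- A set `R ⊆ ℕ` is upward closed w.r.t. the relation `r`. -/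
def UpClosed (r : ℕ → ℕ → Prop) (R : Set ℕ) : Prop :=
  ∀ x ∈ R, ∀ y, r x y → y ∈ R

/-- The family `𝓡_{n,m}` of upward closed sets containing `m` but not `n`. -/
def Rfam (r : ℕ → ℕ → Prop) (n m : ℕ) : Set (Set ℕ) :=
  {R | UpClosed r R ∧ n ∉ R ∧ m ∈ R}

/-- The `l`-th column sum `λ_{*,l}` of a matrix. -/
noncomputable def colSum (Λ : ℕ × ℕ → ℝ) (l : ℕ) : ℝ := ∑' k, Λ (k, l)

/-- Sum of a sequence over a subset of `ℕ`. -/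
noncomputable def setSum (f : ℕ → ℝ) (R : Set ℕ) : ℝ := ∑' l : R, f l

/-- `inf_{R ∈ 𝓡_{n,m}} ∑_{l∈R} (ν_l − λ_{*,l})`. -/
noncomputable def infR (r : ℕ → ℕ → Prop) (ν : ℕ → ℝ) (Λ : ℕ × ℕ → ℝ) (n m : ℕ) : ℝ :=
  sInf ((fun R => setSum (fun l => ν l - colSum Λ l) R) '' Rfam r n m)

open Classical in
/-- The correction term of Nawrotzki's algorithm. -/
noncomputable def alpha (r : ℕ → ℕ → Prop) (ν : ℕ → ℝ) (n m : ℕ) (Λ : ℕ × ℕ → ℝ) : ℝ :=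
  if r n m then
    (if 0 < min (colSum Λ n - ν n) (min (ν m - colSum Λ m) (infR r ν Λ n m))
      then min (colSum Λ n - ν n) (min (ν m - colSum Λ m) (infR r ν Λ n m)) else 0)
  else 0

/-- The Nawrotzki update map `Φ^ν_{n,m}`. -/
noncomputable def Phi (r : ℕ → ℕ → Prop) (ν : ℕ → ℝ) (n m : ℕ) (Λ : ℕ × ℕ → ℝ) :
    ℕ × ℕ → ℝ :=
  fun p => if p = (n, n) then Λ p - alpha r ν n m Λ
    else if p = (n, m) then Λ p + alpha r ν n m Λ
    else Λ p

/-- The set `S(Λ)` of pairs where the correction term is positive. -/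
def Sset (r : ℕ → ℕ → Prop) (ν : ℕ → ℝ) (Λ : ℕ × ℕ → ℝ) : Set (ℕ × ℕ) :=
  {p | 0 < alpha r ν p.1 p.2 Λ}

/-- The diagonal matrix built from a sequence. -/
noncomputable def diagMat (μ : ℕ → ℝ) : ℕ × ℕ → ℝ :=
  fun p => if p.1 = p.2 then μ p.1 else 0


/-! ### Auxiliary machinery -/

/-- The "indicator" form of `setSum`. -/
private noncomputable def FF (g : ℕ → ℝ) (R : Set ℕ) : ℝ := ∑' l, R.indicator g l

private lemma setSum_eq_FF (g : ℕ → ℝ) (R : Set ℕ) : setSum g R = FF g R :=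
  tsum_subtype R g

private lemma FF_empty (g : ℕ → ℝ) : FF g ∅ = 0 := by
  simp [FF]

private lemma FF_mod {g : ℕ → ℝ} (hg : Summable g) (A B : Set ℕ) :
    FF g (A ∪ B) + FF g (A ∩ B) = FF g A + FF g B := by
  unfold FF
  rw [← Summable.tsum_add (hg.indicator _) (hg.indicator _),
    ← Summable.tsum_add (hg.indicator _) (hg.indicator _)]
  congr 1
  funext x
  by_cases hA : x ∈ A <;> by_cases hB : x ∈ B <;>
    simp [Set.indicator_apply, hA, hB]

private lemma FF_singleton (g : ℕ → ℝ) (a : ℕ) : FF g {a} = g a := by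
  rw [FF, ← tsum_subtype, tsum_singleton]

private lemma upClosed_inter {r : ℕ → ℕ → Prop} {A B : Set ℕ}
    (hA : UpClosed r A) (hB : UpClosed r B) : UpClosed r (A ∩ B) :=
  fun x hx y hxy => ⟨hA x hx.1 y hxy, hB x hx.2 y hxy⟩

private lemma upClosed_union {r : ℕ → ℕ → Prop} {A B : Set ℕ}
    (hA : UpClosed r A) (hB : UpClosed r B) : UpClosed r (A ∪ B) :=
  fun x hx y hxy => hx.elim (fun h => Or.inl (hA x h y hxy)) (fun h => Or.inr (hB x h y hxy))

private lemma FF_tendsto {g : ℕ → ℝ} (hg : Summable g) (C : ℕ → Set ℕ) (D : Set ℕ)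
    (hpt : ∀ l : ℕ, ∀ᶠ j in Filter.atTop, (l ∈ C j ↔ l ∈ D)) :
    Filter.Tendsto (fun j => FF g (C j)) Filter.atTop (nhds (FF g D)) := by
  apply tendsto_tsum_of_dominated_convergence (bound := fun l => |g l|)
    (summable_abs_iff.2 hg)
  · intro l
    refine Filter.Tendsto.congr' ?_ (tendsto_const_nhds (x := D.indicator g l))
    filter_upwards [hpt l] with j hj
    by_cases hD : l ∈ D
    · rw [Set.indicator_of_mem hD, Set.indicator_of_mem (hj.mpr hD)]
    · rw [Set.indicator_of_notMem hD, Set.indicator_of_notMem (fun h => hD (hj.mp h))]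
  · refine Filter.Eventually.of_forall fun j l => ?_
    rw [Real.norm_eq_abs]
    by_cases hC : l ∈ C j
    · rw [Set.indicator_of_mem hC]
    · rw [Set.indicator_of_notMem hC, abs_zero]
      exact abs_nonneg _

/-- Finite initial intersections `R j ∩ R (j+1) ∩ ⋯ ∩ R (j+K-1)`. -/
private def interFrom (R : ℕ → Set ℕ) (j : ℕ) : ℕ → Set ℕ
  | 0 => Set.univ
  | (K + 1) => interFrom R j K ∩ R (j + K)

private lemma mem_interFrom {R : ℕ → Set ℕ} {j : ℕ} :
    ∀ {K l}, l ∈ interFrom R j K ↔ ∀ k < K, l ∈ R (j + k) := by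
  intro K
  induction K with
  | zero => intro l; simp [interFrom]
  | succ K ih =>
    intro l
    constructor
    · rintro ⟨h1, h2⟩ k hk
      rcases Nat.lt_succ_iff_lt_or_eq.1 hk with hk' | rfl
      · exact ih.1 h1 k hk'
      · exact h2
    · intro hl
      exact ⟨ih.2 fun k hk => hl k (Nat.lt_succ_of_lt hk), hl K (Nat.lt_succ_self K)⟩

/-- Finite initial unions `W 0 ∪ ⋯ ∪ W (K-1)`. -/
private def unionUpTo (W : ℕ → Set ℕ) : ℕ → Set ℕ
  | 0 => ∅
  | (K + 1) => unionUpTo W K ∪ W K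

private lemma mem_unionUpTo {W : ℕ → Set ℕ} :
    ∀ {K l}, l ∈ unionUpTo W K ↔ ∃ k < K, l ∈ W k := by
  intro K
  induction K with
  | zero => intro l; simp [unionUpTo]
  | succ K ih =>
    intro l
    constructor
    · rintro (h | h)
      · obtain ⟨k, hk, hl⟩ := ih.1 h
        exact ⟨k, Nat.lt_succ_of_lt hk, hl⟩
      · exact ⟨K, Nat.lt_succ_self K, h⟩
    · rintro ⟨k, hk, hl⟩
      rcases Nat.lt_succ_iff_lt_or_eq.1 hk with hk' | rfl
      · exact Or.inl (ih.2 ⟨k, hk', hl⟩)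
      · exact Or.inr hl

/-- Attainment of the infimum: if the infimum over `𝓡_{n,m}` is `0`, it is attained. -/
private lemma exists_zero_of_sInf_zero (r : ℕ → ℕ → Prop) (hr : IsPartialOrder ℕ r)
    {g : ℕ → ℝ} (hg : Summable g)
    (hFnn : ∀ R : Set ℕ, UpClosed r R → 0 ≤ FF g R)
    (htot : FF g Set.univ = 0)
    {n m : ℕ} (hrnm : r n m) (hnm : n ≠ m)
    (hinf : sInf ((fun R => setSum g R) '' Rfam r n m) = 0) :
    ∃ R, R ∈ Rfam r n m ∧ FF g R = 0 := by
  classical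
  -- the family is nonempty
  have hUm : {y | r m y} ∈ Rfam r n m := by
    refine ⟨fun x hx y hxy => hr.trans m x y hx hxy, ?_, hr.refl m⟩
    intro hmem
    exact hnm (hr.antisymm n m hrnm hmem)
  have himg_ne : ((fun R => setSum g R) '' Rfam r n m).Nonempty :=
    ⟨_, Set.mem_image_of_mem _ hUm⟩
  -- choose near-optimal sets
  have hex : ∀ k : ℕ, ∃ R, R ∈ Rfam r n m ∧ FF g R < (1/2 : ℝ) ^ k := by
    intro k
    obtain ⟨x, hx, hxlt⟩ := exists_lt_of_csInf_lt himg_ne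
      (show sInf ((fun R => setSum g R) '' Rfam r n m) < (1/2 : ℝ) ^ k by
        rw [hinf]; positivity)
    obtain ⟨R, hR, rfl⟩ := hx
    refine ⟨R, hR, ?_⟩
    rw [← setSum_eq_FF]
    exact hxlt
  choose Rk hRk1 hRk2 using hex
  have hRkUp : ∀ k, UpClosed r (Rk k) := fun k => (hRk1 k).1
  have hRkn : ∀ k, n ∉ Rk k := fun k => (hRk1 k).2.1
  have hRkm : ∀ k, m ∈ Rk k := fun k => (hRk1 k).2.2
  have hRknn : ∀ k, 0 ≤ FF g (Rk k) := fun k => hFnn _ (hRkUp k)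
  -- finite intersections are upward closed
  have hPup : ∀ j K, UpClosed r (interFrom Rk j K) := by
    intro j K
    induction K with
    | zero => exact fun x _ y _ => Set.mem_univ y
    | succ K ih => exact upClosed_inter ih (hRkUp (j + K))
  -- bound on finite intersections
  have hPbound : ∀ j K, FF g (interFrom Rk j K) ≤
      2 * (1/2 : ℝ) ^ j - 2 * (1/2 : ℝ) ^ (j + K) := by
    intro j K
    induction K with
    | zero =>
      have he : interFrom Rk j 0 = Set.univ := rfl
      rw [he, htot, Nat.add_zero]
      simp
    | succ K ih =>
      have hmod := FF_mod hg (interFrom Rk j K) (Rk (j + K))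
      have hunn : 0 ≤ FF g (interFrom Rk j K ∪ Rk (j + K)) :=
        hFnn _ (upClosed_union (hPup j K) (hRkUp (j + K)))
      have hlt := le_of_lt (hRk2 (j + K))
      have hpow : ((1:ℝ)/2) ^ (j + (K+1)) = (1/2 : ℝ) ^ (j + K) * (1/2) := by
        rw [show j + (K+1) = (j+K)+1 by omega, pow_succ]
      show FF g (interFrom Rk j K ∩ Rk (j + K)) ≤ _
      rw [hpow]
      linarith
  -- the countable intersections
  set C : ℕ → Set ℕ := fun j => ⋂ k, Rk (j + k) with hCdef
  have hCmem : ∀ j l, l ∈ C j ↔ ∀ k, l ∈ Rk (j + k) := fun j l => Set.mem_iInter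
  have hCten : ∀ j, Filter.Tendsto (fun K => FF g (interFrom Rk j K)) Filter.atTop
      (nhds (FF g (C j))) := by
    intro j
    apply FF_tendsto hg
    intro l
    by_cases hl : l ∈ C j
    · refine Filter.Eventually.of_forall fun K => ?_
      simp only [hl, iff_true]
      exact mem_interFrom.2 fun k _ => (hCmem j l).1 hl k
    · obtain ⟨k0, hk0⟩ : ∃ k, l ∉ Rk (j + k) := by
        by_contra hcon
        push_neg at hcon
        exact hl ((hCmem j l).2 hcon)
      refine Filter.eventually_atTop.2 ⟨k0 + 1, fun K hK => ?_⟩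
      simp only [hl, iff_false]
      intro hmem
      exact hk0 (mem_interFrom.1 hmem k0 (lt_of_lt_of_le (Nat.lt_succ_self k0) hK))
  have hCle : ∀ j, FF g (C j) ≤ 2 * (1/2 : ℝ) ^ j := by
    intro j
    refine le_of_tendsto (hCten j) (Filter.Eventually.of_forall fun K => ?_)
    refine le_trans (hPbound j K) ?_
    have : (0:ℝ) ≤ 2 * (1/2 : ℝ) ^ (j + K) := by positivity
    linarith
  have hCUp : ∀ j, UpClosed r (C j) := by
    intro j x hx y hxy
    exact (hCmem j y).2 fun k => (hRkUp (j + k)) x ((hCmem j x).1 hx k) y hxy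
  have hCnn : ∀ j, 0 ≤ FF g (C j) := fun j => hFnn _ (hCUp j)
  have hCn : ∀ j, n ∉ C j := fun j hmem => hRkn (j + 0) ((hCmem j n).1 hmem 0)
  have hCm : ∀ j, m ∈ C j := fun j => (hCmem j m).2 fun k => hRkm (j + k)
  have hCmono : ∀ j, C j ⊆ C (j + 1) := by
    intro j x hx
    refine (hCmem (j+1) x).2 fun k => ?_
    have h2 := (hCmem j x).1 hx (k + 1)
    have he : j + (k + 1) = (j + 1) + k := by omega
    rwa [he] at h2
  have hCmono' : Monotone C := monotone_nat_of_le_succ hCmono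
  -- the limit set
  set Rstar : Set ℕ := ⋃ j, C j with hRstardef
  have hRstarTen : Filter.Tendsto (fun j => FF g (C j)) Filter.atTop (nhds (FF g Rstar)) := by
    apply FF_tendsto hg
    intro l
    by_cases hl : l ∈ Rstar
    · obtain ⟨j0, hj0⟩ := Set.mem_iUnion.1 hl
      refine Filter.eventually_atTop.2 ⟨j0, fun j hj => ?_⟩
      simp only [hl, iff_true]
      exact hCmono' hj hj0
    · refine Filter.Eventually.of_forall fun j => ?_
      simp only [hl, iff_false]
      exact fun hmem => hl (Set.mem_iUnion.2 ⟨j, hmem⟩)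
  have hzero : Filter.Tendsto (fun j => FF g (C j)) Filter.atTop (nhds 0) := by
    have hub : Filter.Tendsto (fun j : ℕ => 2 * (1/2 : ℝ) ^ j) Filter.atTop (nhds 0) := by
      have := tendsto_pow_atTop_nhds_zero_of_lt_one
        (show (0:ℝ) ≤ 1/2 by norm_num) (show (1:ℝ)/2 < 1 by norm_num)
      have h2 := this.const_mul (2:ℝ)
      simpa using h2
    exact tendsto_of_tendsto_of_tendsto_of_le_of_le tendsto_const_nhds hub
      (fun j => hCnn j) (fun j => hCle j)
  have hFRstar : FF g Rstar = 0 := tendsto_nhds_unique hRstarTen hzero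
  refine ⟨Rstar, ⟨?_, ?_, ?_⟩, hFRstar⟩
  · intro x hx y hxy
    obtain ⟨j, hj⟩ := Set.mem_iUnion.1 hx
    exact Set.mem_iUnion.2 ⟨j, hCUp j x hj y hxy⟩
  · intro hmem
    obtain ⟨j, hj⟩ := Set.mem_iUnion.1 hmem
    exact hCn j hj
  · exact Set.mem_iUnion.2 ⟨0, hCm 0⟩

theorem mu_eq_nu_of_alternatives (r : ℕ → ℕ → Prop) (hr : IsPartialOrder ℕ r)
    (μ ν : ℕ → ℝ) (hμ0 : ∀ n, 0 ≤ μ n) (hν0 : ∀ n, 0 ≤ ν n)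
    (hμs : Summable μ) (hνs : Summable ν)
    (hμ1 : (∑' n, μ n) = 1) (hν1 : (∑' n, ν n) = 1)
    (hdom : ∀ R : Set ℕ, UpClosed r R → setSum μ R ≤ setSum ν R)
    (h : ∀ n m : ℕ, r n m → n ≠ m →
      μ n ≤ ν n ∨ ν m ≤ μ m ∨
      sInf ((fun R => setSum (fun l => ν l - μ l) R) '' Rfam r n m) = 0) :
    μ = ν := by
  classical
  have hgs : Summable (fun l => ν l - μ l) := hνs.sub hμs
  have hFsub : ∀ R : Set ℕ, FF (fun l => ν l - μ l) R = setSum ν R - setSum μ R := by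
    intro R
    rw [← setSum_eq_FF]
    exact Summable.tsum_sub (hνs.subtype R) (hμs.subtype R)
  have hFnn : ∀ R : Set ℕ, UpClosed r R → 0 ≤ FF (fun l => ν l - μ l) R := by
    intro R hR
    rw [hFsub]
    exact sub_nonneg.2 (hdom R hR)
  have htot : FF (fun l => ν l - μ l) Set.univ = 0 := by
    rw [hFsub]
    unfold setSum
    rw [tsum_univ μ, tsum_univ ν, hμ1, hν1, sub_self]
  -- main step : μ ≤ ν pointwise
  have key : ∀ n, μ n ≤ ν n := by
    intro n
    by_contra hn
    push_neg at hn
    -- the predicate "zero set avoiding n"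
    set P : Set ℕ → Prop := fun R =>
      UpClosed r R ∧ n ∉ R ∧ FF (fun l => ν l - μ l) R = 0 with hPdef
    have hPempty : P ∅ :=
      ⟨fun x hx => absurd hx (Set.notMem_empty x), Set.notMem_empty n, FF_empty _⟩
    have hPunion : ∀ A B, P A → P B → P (A ∪ B) := by
      rintro A B ⟨hAu, hAn, hA0⟩ ⟨hBu, hBn, hB0⟩
      refine ⟨upClosed_union hAu hBu, fun hmem => hmem.elim hAn hBn, ?_⟩
      have hmod := FF_mod hgs A B
      have h1 : 0 ≤ FF (fun l => ν l - μ l) (A ∪ B) := hFnn _ (upClosed_union hAu hBu)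
      have h2 : 0 ≤ FF (fun l => ν l - μ l) (A ∩ B) := hFnn _ (upClosed_inter hAu hBu)
      linarith
    -- witnesses
    set W : ℕ → Set ℕ := fun l =>
      if h : ∃ R, P R ∧ l ∈ R then h.choose else ∅ with hWdef
    have hWP : ∀ l, P (W l) := by
      intro l
      rw [hWdef]
      dsimp only
      split
      · exact (Exists.choose_spec ‹∃ R, P R ∧ l ∈ R›).1
      · exact hPempty
    set Rinf : Set ℕ := ⋃ l, W l with hRinfdef
    have hsub : ∀ R, P R → R ⊆ Rinf := by
      intro R hPR x hx
      have hexx : ∃ S, P S ∧ x ∈ S := ⟨R, hPR, hx⟩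
      refine Set.mem_iUnion.2 ⟨x, ?_⟩
      rw [hWdef]
      dsimp only
      rw [dif_pos hexx]
      exact hexx.choose_spec.2
    have hRinfUp : UpClosed r Rinf := by
      intro x hx y hxy
      obtain ⟨l, hl⟩ := Set.mem_iUnion.1 hx
      exact Set.mem_iUnion.2 ⟨l, (hWP l).1 x hl y hxy⟩
    have hnRinf : n ∉ Rinf := by
      intro hmem
      obtain ⟨l, hl⟩ := Set.mem_iUnion.1 hmem
      exact (hWP l).2.1 hl
    -- F(Rinf) = 0 by approximation with finite unions
    have hEP : ∀ K, P (unionUpTo W K) := by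
      intro K
      induction K with
      | zero => exact hPempty
      | succ K ih => exact hPunion _ _ ih (hWP K)
    have hFRinf : FF (fun l => ν l - μ l) Rinf = 0 := by
      have hten : Filter.Tendsto (fun K => FF (fun l => ν l - μ l) (unionUpTo W K))
          Filter.atTop (nhds (FF (fun l => ν l - μ l) Rinf)) := by
        apply FF_tendsto hgs
        intro l
        by_cases hl : l ∈ Rinf
        · obtain ⟨k0, hk0⟩ := Set.mem_iUnion.1 hl
          refine Filter.eventually_atTop.2 ⟨k0 + 1, fun K hK => ?_⟩
          simp only [hl, iff_true]
          exact mem_unionUpTo.2 ⟨k0, lt_of_lt_of_le (Nat.lt_succ_self k0) hK, hk0⟩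
        · refine Filter.Eventually.of_forall fun K => ?_
          simp only [hl, iff_false]
          intro hmem
          obtain ⟨k, _, hk⟩ := mem_unionUpTo.1 hmem
          exact hl (Set.mem_iUnion.2 ⟨k, hk⟩)
      have hconst : Filter.Tendsto (fun K => FF (fun l => ν l - μ l) (unionUpTo W K))
          Filter.atTop (nhds 0) := by
        have : (fun K => FF (fun l => ν l - μ l) (unionUpTo W K)) = fun _ => 0 := by
          funext K
          exact (hEP K).2.2
        rw [this]
        exact tendsto_const_nhds
      exact tendsto_nhds_unique hten hconst
    -- the set S = upset(n) \ Rinf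
    set S : Set ℕ := {y | r n y} \ Rinf with hSdef
    have hSunion : S ∪ Rinf = {y | r n y} ∪ Rinf := by
      ext x
      constructor
      · rintro (⟨h1, _⟩ | h2)
        · exact Or.inl h1
        · exact Or.inr h2
      · rintro (h1 | h2)
        · by_cases hx : x ∈ Rinf
          · exact Or.inr hx
          · exact Or.inl ⟨h1, hx⟩
        · exact Or.inr h2
    have hSinter : S ∩ Rinf = ∅ := by
      ext x
      simp only [Set.mem_inter_iff, Set.mem_empty_iff_false, iff_false]
      rintro ⟨⟨_, hx2⟩, hx3⟩
      exact hx2 hx3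
    have hSnn : 0 ≤ FF (fun l => ν l - μ l) S := by
      have hmod := FF_mod hgs S Rinf
      rw [hSunion, hSinter, FF_empty, hFRinf] at hmod
      have hup : UpClosed r ({y | r n y} ∪ Rinf) :=
        upClosed_union (fun x hx y hxy => hr.trans n x y hx hxy) hRinfUp
      have := hFnn _ hup
      linarith
    have hnS : n ∈ S := ⟨hr.refl n, hnRinf⟩
    -- split off the singleton {n}
    have hsplit : FF (fun l => ν l - μ l) S
        = (ν n - μ n) + FF (fun l => ν l - μ l) (S \ {n}) := by
      have hmod := FF_mod hgs {n} (S \ {n})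
      have hu : ({n} : Set ℕ) ∪ (S \ {n}) = S := by
        ext x
        constructor
        · rintro (h | ⟨h1, _⟩)
          · rw [Set.mem_singleton_iff] at h
            rw [h]
            exact hnS
          · exact h1
        · intro hx
          by_cases hxn : x = n
          · exact Or.inl (by rw [hxn]; rfl)
          · exact Or.inr ⟨hx, hxn⟩
      have hi : ({n} : Set ℕ) ∩ (S \ {n}) = ∅ := by
        ext x
        simp only [Set.mem_inter_iff, Set.mem_singleton_iff, Set.mem_diff,
          Set.mem_empty_iff_false, iff_false]
        rintro ⟨h1, _, h3⟩
        exact h3 h1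
      rw [hu, hi, FF_empty, FF_singleton] at hmod
      linarith
    have hpos : 0 < FF (fun l => ν l - μ l) (S \ {n}) := by
      have : μ n - ν n > 0 := by linarith
      linarith [hSnn, hsplit]
    -- find a surplus point m above n outside Rinf
    have hexm : ∃ m, m ∈ S \ {n} ∧ 0 < ν m - μ m := by
      by_contra hcon
      push_neg at hcon
      have hle : FF (fun l => ν l - μ l) (S \ {n}) ≤ 0 := by
        apply tsum_nonpos
        intro i
        by_cases hi : i ∈ S \ {n}
        · rw [Set.indicator_of_mem hi]
          exact hcon i hi
        · rw [Set.indicator_of_notMem hi]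
      linarith
    obtain ⟨m, ⟨⟨hrm, hmRinf⟩, hmn⟩, hgm⟩ := hexm
    have hmn' : n ≠ m := fun hh => hmn (Set.mem_singleton_iff.2 hh.symm)
    -- apply the alternatives
    rcases h n m hrm hmn' with hc1 | hc2 | hc3
    · linarith
    · linarith
    · obtain ⟨R, hRfam, hR0⟩ :=
        exists_zero_of_sInf_zero r hr hgs hFnn htot hrm hmn' hc3
      have hPR : P R := ⟨hRfam.1, hRfam.2.1, hR0⟩
      exact hmRinf (hsub R hPR hRfam.2.2)
  -- conclude : pointwise ≤ with equal total sums gives equality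
  have htot' : ∑' k, (ν k - μ k) = 0 := by
    rw [Summable.tsum_sub hνs hμs, hμ1, hν1, sub_self]
  have hg0 : ∀ k, ν k - μ k = 0 := by
    intro k
    have hnn : ∀ j, 0 ≤ ν j - μ j := fun j => sub_nonneg.2 (key j)
    have hle : ν k - μ k ≤ ∑' j, (ν j - μ j) :=
      Summable.le_tsum hgs k fun j _ => hnn j
    rw [htot'] at hle
    exact le_antisymm hle (hnn k)
  funext k
  have := hg0 k
  linarith
end

section
/- Under the hypotheses of the previous proposition (Λ nonnegative with total sum 1, λ_{*,n} = λ_{n,n} for n ∈ π₁(S(Λ)), column dominance by ν, and α^ν_{n',m'}(Λ) > 0), one has S(Φ^ν_{n',m'}(Λ)) ⊆ S(Λ) \ {(n',m')}. -/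
open scoped BigOperators
open Filter

open Classical in
lemma tsum_subtype_ind (R : Set ℕ) (a : ℕ) (c : ℝ) :
    (∑' l : R, (if (l : ℕ) = a then c else 0)) = if a ∈ R then c else 0 := by
  by_cases ha : a ∈ R
  · rw [if_pos ha, tsum_eq_single (⟨a, ha⟩ : R)]
    · simp
    · intro b hb
      have : (b : ℕ) ≠ a := fun h => hb (Subtype.ext h)
      simp [this]
  · rw [if_neg ha]
    convert tsum_zero with b
    have : (b : ℕ) ≠ a := fun h => ha (h ▸ b.2)
    simp [this]

lemma summable_colSum (Λ : ℕ × ℕ → ℝ) (hΛ : Summable fun p => |Λ p|) :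
    Summable fun l => colSum Λ l := by
  have h1 : Summable fun l => ∑' k, |Λ (k, l)| := hΛ.prod_symm.prod
  refine Summable.of_abs (h1.of_nonneg_of_le (fun l => abs_nonneg _) fun l => ?_)
  have hs : Summable fun k => ‖Λ (k, l)‖ := by
    simpa [Real.norm_eq_abs] using hΛ.prod_symm.prod_factor l
  simpa [Real.norm_eq_abs, colSum] using norm_tsum_le_tsum_norm hs

lemma alpha_pos_iff (r : ℕ → ℕ → Prop) (ν : ℕ → ℝ) (n m : ℕ) (Λ : ℕ × ℕ → ℝ) :
    0 < alpha r ν n m Λ ↔ r n m ∧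
      0 < min (colSum Λ n - ν n) (min (ν m - colSum Λ m) (infR r ν Λ n m)) := by
  unfold alpha
  split_ifs with h1 h2
  · simp [h1, h2]
  · simp [h1, h2]
  · simp [h1]

lemma alpha_eq_min {r : ℕ → ℕ → Prop} {ν : ℕ → ℝ} {n m : ℕ} {Λ : ℕ × ℕ → ℝ}
    (h1 : r n m)
    (h2 : 0 < min (colSum Λ n - ν n) (min (ν m - colSum Λ m) (infR r ν Λ n m))) :
    alpha r ν n m Λ = min (colSum Λ n - ν n) (min (ν m - colSum Λ m) (infR r ν Λ n m)) := by
  unfold alpha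
  rw [if_pos h1, if_pos h2]

theorem Sset_Phi_subset (r : ℕ → ℕ → Prop) (hr : IsPartialOrder ℕ r)
    (ν : ℕ → ℝ) (hν : Summable fun n => |ν n|)
    (Λ : ℕ × ℕ → ℝ) (hΛ : Summable fun p => |Λ p|)
    (hnn : ∀ p, 0 ≤ Λ p) (h1 : (∑' p, Λ p) = 1)
    (hdiag : ∀ n, (∃ m, (n, m) ∈ Sset r ν Λ) → colSum Λ n = Λ (n, n))
    (hdom : ∀ R : Set ℕ, UpClosed r R →
      setSum (fun l => colSum Λ l) R ≤ setSum ν R)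
    (n' m' : ℕ) (hα : 0 < alpha r ν n' m' Λ) :
    Sset r ν (Phi r ν n' m' Λ) ⊆ Sset r ν Λ \ {(n', m')} := by
  classical
  set α₀ := alpha r ν n' m' Λ with hα₀def
  obtain ⟨hr', hmin⟩ := (alpha_pos_iff r ν n' m' Λ).1 hα
  have hαval : α₀ = min (colSum Λ n' - ν n') (min (ν m' - colSum Λ m') (infR r ν Λ n' m')) :=
    alpha_eq_min hr' hmin
  have hb1 : α₀ ≤ colSum Λ n' - ν n' := hαval ▸ min_le_left _ _
  have hb2 : α₀ ≤ ν m' - colSum Λ m' :=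
    le_trans (hαval ▸ min_le_right _ _) (min_le_left _ _)
  have hb3 : α₀ ≤ infR r ν Λ n' m' :=
    le_trans (hαval ▸ min_le_right _ _) (min_le_right _ _)
  have hne : n' ≠ m' := by
    intro h; subst h; linarith
  -- summability facts
  have hνs : Summable ν := hν.of_abs
  have hcs : Summable fun l => colSum Λ l := summable_colSum Λ hΛ
  have hslice : ∀ l, Summable fun k => Λ (k, l) := fun l =>
    (hΛ.of_abs.prod_symm).prod_factor l
  set Λ' := Phi r ν n' m' Λ with hΛ'def
  -- the shift in column sums
  have hcol' : ∀ l, colSum Λ' l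
      = colSum Λ l + ((if l = m' then α₀ else 0) - (if l = n' then α₀ else 0)) := by
    intro l
    have hpt : ∀ k, Λ' (k, l) = Λ (k, l)
        + (if k = n' then ((if l = m' then α₀ else 0) - (if l = n' then α₀ else 0)) else 0) := by
      intro k
      simp only [hΛ'def, Phi, ← hα₀def, Prod.mk.injEq]
      by_cases hk : k = n'
      · by_cases hl : l = n'
        · have hl2 : l ≠ m' := by rw [hl]; exact hne
          simp [hk, hl, hl2, hne]
          try ring
        · by_cases hl2 : l = m'
          · simp [hk, hl, hl2, Ne.symm hne]
            try ring
          · simp [hk, hl, hl2]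
      · simp [hk]
    have hsum2 : Summable fun k : ℕ =>
        (if k = n' then ((if l = m' then α₀ else 0) - (if l = n' then α₀ else 0)) else 0) :=
      (hasSum_ite_eq n' _).summable
    calc colSum Λ' l = ∑' k, (Λ (k, l)
        + (if k = n' then ((if l = m' then α₀ else 0) - (if l = n' then α₀ else 0)) else 0)) := by
          unfold colSum; exact tsum_congr hpt
      _ = colSum Λ l + ((if l = m' then α₀ else 0) - (if l = n' then α₀ else 0)) := by
          rw [Summable.tsum_add (hslice l) hsum2, tsum_ite_eq]; rfl
  have hcs' : Summable fun l => colSum Λ' l := by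
    have : (fun l => colSum Λ' l) = fun l =>
        colSum Λ l + ((if l = m' then α₀ else 0) - (if l = n' then α₀ else 0)) :=
      funext hcol'
    rw [this]
    exact hcs.add (((hasSum_ite_eq m' α₀).summable).sub ((hasSum_ite_eq n' α₀).summable))
  -- setSum shift
  have hsetSum' : ∀ R : Set ℕ, setSum (fun l => ν l - colSum Λ' l) R
      = setSum (fun l => ν l - colSum Λ l) R
        - ((if m' ∈ R then α₀ else 0) - (if n' ∈ R then α₀ else 0)) := by
    intro R
    have hfun : ∀ l : R, ν l - colSum Λ' l = (ν l - colSum Λ l)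
        - (((if (l : ℕ) = m' then α₀ else 0)) - ((if (l : ℕ) = n' then α₀ else 0))) := by
      intro l; rw [hcol']; ring
    have hs1 : Summable fun l : R => ν l - colSum Λ l := (hνs.sub hcs).subtype R
    have hs2 : Summable fun l : R =>
        ((if (l : ℕ) = m' then α₀ else 0)) - ((if (l : ℕ) = n' then α₀ else 0)) := by
      have : Summable fun l : ℕ =>
          ((if l = m' then α₀ else 0)) - ((if l = n' then α₀ else 0)) :=
        ((hasSum_ite_eq m' α₀).summable).sub ((hasSum_ite_eq n' α₀).summable)
      exact this.subtype R
    have hs2a : Summable fun l : R => (if (l : ℕ) = m' then α₀ else 0) :=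
      (((hasSum_ite_eq m' α₀).summable)).subtype R
    have hs2b : Summable fun l : R => (if (l : ℕ) = n' then α₀ else 0) :=
      (((hasSum_ite_eq n' α₀).summable)).subtype R
    calc setSum (fun l => ν l - colSum Λ' l) R
        = ∑' l : R, ((ν l - colSum Λ l)
            - (((if (l : ℕ) = m' then α₀ else 0)) - ((if (l : ℕ) = n' then α₀ else 0)))) :=
          tsum_congr hfun
      _ = setSum (fun l => ν l - colSum Λ l) R
          - ((if m' ∈ R then α₀ else 0) - (if n' ∈ R then α₀ else 0)) := by
          rw [Summable.tsum_sub hs1 hs2, Summable.tsum_sub hs2a hs2b, tsum_subtype_ind, tsum_subtype_ind]; rfl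
  -- nonnegativity of set sums for Λ
  have hnonneg : ∀ R : Set ℕ, UpClosed r R →
      0 ≤ setSum (fun l => ν l - colSum Λ l) R := by
    intro R hR
    have : setSum (fun l => ν l - colSum Λ l) R
        = setSum ν R - setSum (fun l => colSum Λ l) R :=
      Summable.tsum_sub (hνs.subtype R) (hcs.subtype R)
    rw [this]
    linarith [hdom R hR]
  have hbdd : ∀ n m : ℕ, BddBelow
      ((fun R => setSum (fun l => ν l - colSum Λ l) R) '' Rfam r n m) := by
    intro n m
    exact ⟨0, by rintro x ⟨R, hR, rfl⟩; exact hnonneg R hR.1⟩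
  -- nonnegativity for Λ'
  have hnonneg' : ∀ R : Set ℕ, UpClosed r R →
      0 ≤ setSum (fun l => ν l - colSum Λ' l) R := by
    intro R hR
    rw [hsetSum' R]
    by_cases hn' : n' ∈ R
    · have hm' : m' ∈ R := hR n' hn' m' hr'
      simp only [if_pos hn', if_pos hm']
      linarith [hnonneg R hR]
    · by_cases hm' : m' ∈ R
      · have hmem : R ∈ Rfam r n' m' := ⟨hR, hn', hm'⟩
        have hle : infR r ν Λ n' m' ≤ setSum (fun l => ν l - colSum Λ l) R :=
          csInf_le (hbdd n' m') ⟨R, hmem, rfl⟩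
        simp only [if_pos hm', if_neg hn']
        linarith
      · simp only [if_neg hm', if_neg hn']
        linarith [hnonneg R hR]
  have hbdd' : ∀ n m : ℕ, BddBelow
      ((fun R => setSum (fun l => ν l - colSum Λ' l) R) '' Rfam r n m) := by
    intro n m
    exact ⟨0, by rintro x ⟨R, hR, rfl⟩; exact hnonneg' R hR.1⟩
  -- main argument
  rintro ⟨n, m⟩ hp
  obtain ⟨hrnm, hmin'⟩ := (alpha_pos_iff r ν n m Λ').1 hp
  rw [lt_min_iff, lt_min_iff] at hmin'
  obtain ⟨hA', hB', hI'⟩ := hmin'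
  simp only [sub_pos] at hA' hB'
  -- n ≠ m'
  have hnm' : n ≠ m' := by
    intro h
    have hx := hcol' m'
    simp [Ne.symm hne] at hx
    rw [h] at hA'
    linarith
  have hA : ν n < colSum Λ n := by
    have hx := hcol' n
    rw [if_neg hnm'] at hx
    by_cases hn : n = n'
    · rw [if_pos hn] at hx; linarith
    · rw [if_neg hn] at hx; linarith
  -- m ≠ n'
  have hmn' : m ≠ n' := by
    intro h
    have hx := hcol' n'
    simp [hne] at hx
    rw [h] at hB'
    linarith
  have hB : colSum Λ m < ν m := by
    have hx := hcol' m
    rw [if_neg hmn'] at hx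
    by_cases hm : m = m'
    · rw [if_pos hm] at hx; linarith
    · rw [if_neg hm] at hx; linarith
  -- Rfam n m nonempty
  have hfamne : (Rfam r n m).Nonempty := by
    by_contra h
    rw [Set.not_nonempty_iff_eq_empty] at h
    have : infR r ν Λ' n m = 0 := by
      rw [infR, h, Set.image_empty, Real.sInf_empty]
    linarith
  -- infR for Λ is positive
  have hI : 0 < infR r ν Λ n m := by
    refine lt_of_lt_of_le hI' (le_csInf (hfamne.image _) ?_)
    rintro x ⟨R, hR, rfl⟩
    obtain ⟨hRu, hRn, hRm⟩ := hR
    have key := hsetSum' R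
    have hle' : infR r ν Λ' n m ≤ setSum (fun l => ν l - colSum Λ' l) R :=
      csInf_le (hbdd' n m) ⟨R, ⟨hRu, hRn, hRm⟩, rfl⟩
    by_cases hn' : n' ∈ R
    · have hm' : m' ∈ R := hRu n' hn' m' hr'
      rw [if_pos hn', if_pos hm'] at key
      linarith
    · rw [if_neg hn'] at key
      by_cases hm' : m' ∈ R
      · rw [if_pos hm'] at key
        linarith
      · rw [if_neg hm'] at key
        linarith
  constructor
  · exact (alpha_pos_iff r ν n m Λ).2 ⟨hrnm, lt_min (by linarith) (lt_min (by linarith) hI)⟩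
  · -- (n, m) ≠ (n', m')
    intro hmem
    rw [Set.mem_singleton_iff] at hmem
    have hn : n = n' := congrArg Prod.fst hmem
    have hm : m = m' := congrArg Prod.snd hmem
    rw [hn] at hA'
    rw [hm] at hB'
    rw [hn, hm] at hfamne hI'
    rcases min_cases (colSum Λ n' - ν n') (min (ν m' - colSum Λ m') (infR r ν Λ n' m')) with
      ⟨h, _⟩ | ⟨h, _⟩
    · -- α₀ = colSum Λ n' - ν n'
      have hval : α₀ = colSum Λ n' - ν n' := hαval.trans h
      have hx := hcol' n'
      simp [hne] at hx
      linarith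
    · rcases min_cases (ν m' - colSum Λ m') (infR r ν Λ n' m') with ⟨h2, _⟩ | ⟨h2, _⟩
      · -- α₀ = ν m' - colSum Λ m'
        have hval : α₀ = ν m' - colSum Λ m' := hαval.trans (h.trans h2)
        have hx := hcol' m'
        simp [Ne.symm hne] at hx
        linarith
      · -- α₀ = infR r ν Λ n' m'
        have hval : α₀ = infR r ν Λ n' m' := hαval.trans (h.trans h2)
        have hlt : infR r ν Λ n' m' < α₀ + infR r ν Λ' n' m' := by linarith
        unfold infR at hlt
        obtain ⟨x, hxmem, hx⟩ := exists_lt_of_csInf_lt (hfamne.image _) hlt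
        obtain ⟨R, hR, rfl⟩ := hxmem
        obtain ⟨hRu, hRn, hRm⟩ := hR
        have key := hsetSum' R
        rw [if_pos hRm, if_neg hRn] at key
        have hle' : infR r ν Λ' n' m' ≤ setSum (fun l => ν l - colSum Λ' l) R :=
          csInf_le (hbdd' n' m') ⟨R, ⟨hRu, hRn, hRm⟩, rfl⟩
        have hxx : setSum (fun l => ν l - colSum Λ l) R < α₀ + infR r ν Λ' n' m' := hx
        linarith
end

section
/- Let (Λ^{(k)})_{k∈ℕ} be a sequence in ℓ¹(ℕ×ℕ) with nonnegative entries and sup_k ‖Λ^{(k)}‖₁ < ∞. Suppose ℕ×ℕ = A ∪ B (disjoint) such that for each (n,m) ∈ A the sequence (λ^{(k)}_{n,m})_k is nondecreasing and for each (n,m) ∈ B it is nonincreasing. Then (Λ^{(k)}) converges in the ℓ¹-norm. -/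
open scoped BigOperators
open Filter

theorem monotone_l1_convergence (Ls : ℕ → ℕ × ℕ → ℝ)
    (hsum : ∀ k, Summable fun p => |Ls k p|)
    (hnn : ∀ k p, 0 ≤ Ls k p)
    (hbd : ∃ C : ℝ, ∀ k, (∑' p, |Ls k p|) ≤ C)
    (A B : Set (ℕ × ℕ)) (hAB : A ∪ B = Set.univ) (hdisj : Disjoint A B)
    (hA : ∀ p ∈ A, Monotone fun k => Ls k p)
    (hB : ∀ p ∈ B, Antitone fun k => Ls k p) :
    ∃ L : ℕ × ℕ → ℝ, Summable (fun p => |L p|) ∧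
      Tendsto (fun k => ∑' p, |Ls k p - L p|) atTop (nhds 0) := by
  classical
  obtain ⟨C, hC⟩ := hbd
  set L : ℕ × ℕ → ℝ := fun p => if p ∈ A then ⨆ k, Ls k p else ⨅ k, Ls k p with hLdef
  have hbdd : ∀ p, BddAbove (Set.range fun k => Ls k p) := by
    intro p
    refine ⟨C, ?_⟩
    rintro x ⟨k, rfl⟩
    calc Ls k p = |Ls k p| := (abs_of_nonneg (hnn k p)).symm
      _ ≤ ∑' q, |Ls k q| := Summable.le_tsum (hsum k) p (fun q _ => abs_nonneg _)
      _ ≤ C := hC k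
  have hbddb : ∀ p, BddBelow (Set.range fun k => Ls k p) :=
    fun p => ⟨0, by rintro x ⟨k, rfl⟩; exact hnn k p⟩
  have hmemB : ∀ p : ℕ × ℕ, p ∉ A → p ∈ B := by
    intro p hp
    have : p ∈ A ∪ B := hAB ▸ Set.mem_univ p
    rcases this with h | h
    · exact absurd h hp
    · exact h
  have hptw : ∀ p, Tendsto (fun k => Ls k p) atTop (nhds (L p)) := by
    intro p
    by_cases hp : p ∈ A
    · simpa [hLdef, hp] using tendsto_atTop_ciSup (hA p hp) (hbdd p)
    · simpa [hLdef, hp] using tendsto_atTop_ciInf (hB p (hmemB p hp)) (hbddb p)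
  have hLnn : ∀ p, 0 ≤ L p :=
    fun p => ge_of_tendsto (hptw p) (Filter.Eventually.of_forall fun k => hnn k p)
  have hLle : ∀ (p) (k : ℕ), p ∈ A → Ls k p ≤ L p := by
    intro p k hp
    simp only [hLdef, hp, if_pos]
    exact le_ciSup (hbdd p) k
  have hLge : ∀ (p) (k : ℕ), p ∉ A → L p ≤ Ls k p := by
    intro p k hp
    simp only [hLdef, hp, if_neg, not_false_iff]
    exact ciInf_le (hbddb p) k
  have hLsum : Summable L := by
    apply summable_of_sum_le (c := C) hLnn
    intro u
    have h1 : Tendsto (fun k => ∑ p ∈ u, Ls k p) atTop (nhds (∑ p ∈ u, L p)) :=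
      tendsto_finset_sum u (fun p _ => hptw p)
    refine le_of_tendsto h1 (Filter.Eventually.of_forall fun k => ?_)
    calc ∑ p ∈ u, Ls k p = ∑ p ∈ u, |Ls k p| := by
          exact Finset.sum_congr rfl fun p _ => (abs_of_nonneg (hnn k p)).symm
      _ ≤ ∑' q, |Ls k q| := Summable.sum_le_tsum u (fun q _ => abs_nonneg _) (hsum k)
      _ ≤ C := hC k
  refine ⟨L, by simpa [abs_of_nonneg, hLnn] using hLsum, ?_⟩
  have hbound : Summable (fun p => L p + Ls 0 p) :=
    hLsum.add (by simpa [abs_of_nonneg, hnn 0] using hsum 0)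
  have := tendsto_tsum_of_dominated_convergence (f := fun k p => |Ls k p - L p|)
    (g := fun _ => (0:ℝ)) (bound := fun p => L p + Ls 0 p) hbound
    (fun p => by
      have : Tendsto (fun k => Ls k p - L p) atTop (nhds (L p - L p)) :=
        (hptw p).sub tendsto_const_nhds
      simpa using this.abs)
    (Filter.Eventually.of_forall fun k p => by
      rw [Real.norm_eq_abs, abs_abs]
      show |Ls k p - L p| ≤ L p + Ls 0 p
      by_cases hp : p ∈ A
      · have h1 := hLle p k hp
        rw [abs_of_nonpos (by linarith)]
        have h2 := hnn 0 p
        have h3 := hnn k p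
        linarith
      · have h1 := hLge p k hp
        rw [abs_of_nonneg (by linarith)]
        have h2 : Ls k p ≤ Ls 0 p := hB p (hmemB p hp) (Nat.zero_le k)
        have := hLnn p
        linarith)
  simpa using this
end

section
/- For any ν, ν̃ ∈ ℓ¹(ℕ), Λ, Λ̃ ∈ ℓ¹(ℕ×ℕ), and (n,m) ∈ ℕ×ℕ, one has |α^ν_{n,m}(Λ) − α^{ν̃}_{n,m}(Λ̃)| ≤ ‖Λ − Λ̃‖₁ + ‖ν − ν̃‖₁. -/
open scoped BigOperators
open Filter

private lemma ite_pos_max (x : ℝ) : (if 0 < x then x else 0) = max x 0 := by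
  split_ifs with h
  · exact (max_eq_left h.le).symm
  · exact (max_eq_right (not_lt.1 h)).symm

private lemma abs_csInf_sub_csInf_le {α : Type*} {A : Set α} (hA : A.Nonempty)
    {f g : α → ℝ} {D : ℝ} (hbf : BddBelow (f '' A)) (hbg : BddBelow (g '' A))
    (h : ∀ x ∈ A, |f x - g x| ≤ D) : |sInf (f '' A) - sInf (g '' A)| ≤ D := by
  have h1 : sInf (f '' A) - D ≤ sInf (g '' A) := by
    apply le_csInf (hA.image g)
    rintro _ ⟨x, hx, rfl⟩
    have h2 := csInf_le hbf (Set.mem_image_of_mem f hx)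
    have h3 := abs_le.1 (h x hx)
    linarith [h3.1, h3.2]
  have h1' : sInf (g '' A) - D ≤ sInf (f '' A) := by
    apply le_csInf (hA.image f)
    rintro _ ⟨x, hx, rfl⟩
    have h2 := csInf_le hbg (Set.mem_image_of_mem g hx)
    have h3 := abs_le.1 (h x hx)
    linarith [h3.1, h3.2]
  rw [abs_le]; constructor <;> linarith

private lemma col_summable {M : ℕ × ℕ → ℝ} (hM : Summable fun p => |M p|) (l : ℕ) :
    Summable fun k => |M (k, l)| :=
  hM.comp_injective (fun _ _ hab => (Prod.ext_iff.1 hab).1)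

private lemma abs_colSum_le {M : ℕ × ℕ → ℝ} (hM : Summable fun p => |M p|) (l : ℕ) :
    |colSum M l| ≤ ∑' k, |M (k, l)| := by
  have hs : Summable fun k => ‖M (k, l)‖ := by
    simp only [Real.norm_eq_abs]; exact col_summable hM l
  have h := norm_tsum_le_tsum_norm hs
  simp only [Real.norm_eq_abs] at h
  exact h

private lemma col_outer {M : ℕ × ℕ → ℝ} (hM : Summable fun p => |M p|) :
    Summable (fun l => ∑' k, |M (k, l)|) ∧ (∑' l, ∑' k, |M (k, l)|) = ∑' p, |M p| := by
  have hF : Summable (fun q : ℕ × ℕ => |M (q.2, q.1)|) :=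
    ((Equiv.prodComm ℕ ℕ).summable_iff).2 hM
  refine ⟨((summable_prod_of_nonneg (fun q => abs_nonneg _)).1 hF).2, ?_⟩
  rw [← (Equiv.prodComm ℕ ℕ).tsum_eq (fun p => |M p|)]
  exact (Summable.tsum_prod hF).symm

private lemma abs_setSum_le {f : ℕ → ℝ} (hf : Summable fun l => |f l|) (R : Set ℕ) :
    |setSum f R| ≤ ∑' l, |f l| := by
  have hsub : Summable fun l : R => ‖f ↑l‖ := by
    simp only [Real.norm_eq_abs]; exact hf.subtype R
  have h1 := norm_tsum_le_tsum_norm hsub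
  simp only [Real.norm_eq_abs] at h1
  refine le_trans h1 ?_
  exact tsum_comp_le_tsum_of_inj hf (fun l => abs_nonneg _) Subtype.val_injective

theorem alpha_perturbation (r : ℕ → ℕ → Prop)
    (ν ν' : ℕ → ℝ) (hν : Summable fun n => |ν n|) (hν' : Summable fun n => |ν' n|)
    (Λ Λ' : ℕ × ℕ → ℝ) (hΛ : Summable fun p => |Λ p|) (hΛ' : Summable fun p => |Λ' p|)
    (n m : ℕ) :
    |alpha r ν n m Λ - alpha r ν' n m Λ'| ≤
      (∑' p, |Λ p - Λ' p|) + ∑' l, |ν l - ν' l| := by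
  classical
  have hΔ : Summable fun p => |Λ p - Λ' p| :=
    Summable.of_nonneg_of_le (fun p => abs_nonneg _) (fun p => abs_sub _ _) (hΛ.add hΛ')
  have hδν : Summable fun l => |ν l - ν' l| :=
    Summable.of_nonneg_of_le (fun l => abs_nonneg _) (fun l => abs_sub _ _) (hν.add hν')
  have hcΔ : Summable (fun l => ∑' k, |Λ (k, l) - Λ' (k, l)|) := (col_outer hΔ).1
  have hcΔsum : (∑' l, ∑' k, |Λ (k, l) - Λ' (k, l)|) = ∑' p, |Λ p - Λ' p| := (col_outer hΔ).2
  have hTΔ0 : (0:ℝ) ≤ ∑' p, |Λ p - Λ' p| := tsum_nonneg fun p => abs_nonneg _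
  have hTν0 : (0:ℝ) ≤ ∑' l, |ν l - ν' l| := tsum_nonneg fun l => abs_nonneg _
  -- column sum difference bound
  have hcolΔ : ∀ l, |colSum Λ l - colSum Λ' l| ≤ ∑' k, |Λ (k, l) - Λ' (k, l)| := by
    intro l
    have h1 : colSum Λ l - colSum Λ' l = colSum (fun p => Λ p - Λ' p) l := by
      rw [colSum, colSum, colSum,
        ← Summable.tsum_sub ((col_summable hΛ l).of_abs) ((col_summable hΛ' l).of_abs)]
    rw [h1]
    exact abs_colSum_le hΔ l
  -- colSum n bound by total
  have hcΔ_le : ∀ l, (∑' k, |Λ (k, l) - Λ' (k, l)|) ≤ ∑' p, |Λ p - Λ' p| := by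
    intro l
    rw [← hcΔsum]
    exact Summable.le_tsum hcΔ l (fun j _ => tsum_nonneg fun k => abs_nonneg _)
  have hδν_le : ∀ l, |ν l - ν' l| ≤ ∑' l, |ν l - ν' l| := fun l =>
    Summable.le_tsum hδν l (fun j _ => abs_nonneg _)
  -- bound for first term
  have hA : |(colSum Λ n - ν n) - (colSum Λ' n - ν' n)| ≤
      (∑' p, |Λ p - Λ' p|) + ∑' l, |ν l - ν' l| := by
    have e : (colSum Λ n - ν n) - (colSum Λ' n - ν' n)
        = (colSum Λ n - colSum Λ' n) - (ν n - ν' n) := by ring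
    rw [e]
    refine (abs_sub _ _).trans ?_
    exact add_le_add ((hcolΔ n).trans (hcΔ_le n)) (hδν_le n)
  -- bound for second term
  have hB : |(ν m - colSum Λ m) - (ν' m - colSum Λ' m)| ≤
      (∑' p, |Λ p - Λ' p|) + ∑' l, |ν l - ν' l| := by
    have e : (ν m - colSum Λ m) - (ν' m - colSum Λ' m)
        = (ν m - ν' m) - (colSum Λ m - colSum Λ' m) := by ring
    rw [e]
    have h1 := abs_sub (ν m - ν' m) (colSum Λ m - colSum Λ' m)
    linarith [hδν_le m, (hcolΔ m).trans (hcΔ_le m)]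
  -- summability of the sequences appearing in setSum
  have hcabsΛ : Summable fun l => |colSum Λ l| :=
    Summable.of_nonneg_of_le (fun l => abs_nonneg _) (abs_colSum_le hΛ) (col_outer hΛ).1
  have hcabsΛ' : Summable fun l => |colSum Λ' l| :=
    Summable.of_nonneg_of_le (fun l => abs_nonneg _) (abs_colSum_le hΛ') (col_outer hΛ').1
  have hg : Summable fun l => ν l - colSum Λ l := hν.of_abs.sub hcabsΛ.of_abs
  have hg' : Summable fun l => ν' l - colSum Λ' l := hν'.of_abs.sub hcabsΛ'.of_abs
  have hgabs : Summable fun l => |ν l - colSum Λ l| :=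
    Summable.of_nonneg_of_le (fun l => abs_nonneg _) (fun l => abs_sub _ _) (hν.add hcabsΛ)
  have hg'abs : Summable fun l => |ν' l - colSum Λ' l| :=
    Summable.of_nonneg_of_le (fun l => abs_nonneg _) (fun l => abs_sub _ _) (hν'.add hcabsΛ')
  -- pointwise difference bound
  have hgg' : ∀ l, |(ν l - colSum Λ l) - (ν' l - colSum Λ' l)|
      ≤ (∑' k, |Λ (k, l) - Λ' (k, l)|) + |ν l - ν' l| := by
    intro l
    have e : (ν l - colSum Λ l) - (ν' l - colSum Λ' l)
        = (ν l - ν' l) - (colSum Λ l - colSum Λ' l) := by ring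
    rw [e]
    have h1 := abs_sub (ν l - ν' l) (colSum Λ l - colSum Λ' l)
    linarith [hcolΔ l]
  have hdiffabs : Summable fun l => |(ν l - colSum Λ l) - (ν' l - colSum Λ' l)| :=
    Summable.of_nonneg_of_le (fun l => abs_nonneg _) hgg' (hcΔ.add hδν)
  have hdiff_tsum : (∑' l, |(ν l - colSum Λ l) - (ν' l - colSum Λ' l)|)
      ≤ (∑' p, |Λ p - Λ' p|) + ∑' l, |ν l - ν' l| := by
    refine (Summable.tsum_le_tsum hgg' hdiffabs (hcΔ.add hδν)).trans ?_
    rw [Summable.tsum_add hcΔ hδν, hcΔsum]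
  -- setSum difference bound
  have hset : ∀ R : Set ℕ, |setSum (fun l => ν l - colSum Λ l) R
      - setSum (fun l => ν' l - colSum Λ' l) R|
      ≤ (∑' p, |Λ p - Λ' p|) + ∑' l, |ν l - ν' l| := by
    intro R
    have e : setSum (fun l => ν l - colSum Λ l) R - setSum (fun l => ν' l - colSum Λ' l) R
        = setSum (fun l => (ν l - colSum Λ l) - (ν' l - colSum Λ' l)) R := by
      have hs1 : Summable fun l : R => ν ↑l - colSum Λ ↑l := hg.subtype R
      have hs2 : Summable fun l : R => ν' ↑l - colSum Λ' ↑l := hg'.subtype R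
      rw [setSum, setSum, setSum]
      exact (Summable.tsum_sub hs1 hs2).symm
    rw [e]
    exact (abs_setSum_le hdiffabs R).trans hdiff_tsum
  -- infR bound
  have hInf : |infR r ν Λ n m - infR r ν' Λ' n m|
      ≤ (∑' p, |Λ p - Λ' p|) + ∑' l, |ν l - ν' l| := by
    by_cases hne : (Rfam r n m).Nonempty
    · rw [infR, infR]
      have hbf : BddBelow ((fun R => setSum (fun l => ν l - colSum Λ l) R) '' Rfam r n m) := by
        refine ⟨-(∑' l, |ν l - colSum Λ l|), ?_⟩
        rintro _ ⟨R, _, rfl⟩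
        have := abs_setSum_le hgabs R
        have h2 := neg_abs_le (setSum (fun l => ν l - colSum Λ l) R)
        linarith
      have hbg : BddBelow ((fun R => setSum (fun l => ν' l - colSum Λ' l) R) '' Rfam r n m) := by
        refine ⟨-(∑' l, |ν' l - colSum Λ' l|), ?_⟩
        rintro _ ⟨R, _, rfl⟩
        have := abs_setSum_le hg'abs R
        have h2 := neg_abs_le (setSum (fun l => ν' l - colSum Λ' l) R)
        linarith
      exact abs_csInf_sub_csInf_le hne hbf hbg (fun R _ => hset R)
    · rw [Set.not_nonempty_iff_eq_empty] at hne
      rw [infR, infR, hne]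
      simp only [Set.image_empty, Real.sInf_empty, sub_zero, abs_zero]
      linarith
  -- assemble
  by_cases hr : r n m
  · rw [alpha, alpha, if_pos hr, if_pos hr, ite_pos_max, ite_pos_max]
    refine (abs_max_sub_max_le_abs _ _ 0).trans ?_
    refine (abs_min_sub_min_le_max _ _ _ _).trans ?_
    refine max_le hA ?_
    refine (abs_min_sub_min_le_max _ _ _ _).trans ?_
    exact max_le hB hInf
  · rw [alpha, alpha, if_neg hr, if_neg hr, sub_zero, abs_zero]
    linarith
end
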